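/- arXiv:1801.00379 — 12 statements merged into one kernel-verified Lean document; each statement's English description precedes it below -/
import Mathlib

section
/- Let K be an algebraically closed field, and let n ≥ 1, m ≥ 1. Let w be a word with constants in SL_n(K), i.e. an element of the free product (FreeGroup over Fin m) ∗ SL_n(K), with evaluation map w̃ : SL_n(K)^m → SL_n(K) sending a tuple (g_1,…,g_m) to the image of w under the group homomorphism that maps the i-th free generator to g_i and each constant of SL_n(K) to itself. For 1 ≤ i ≤ n let χ_i(X) ∈ K denote the coefficient of λ^{n−i} in the characteristic polynomial of the matrix X. Then for each i, the function SL_n(K)^m → K given by (g_1,…,g_m) ↦ χ_i(w̃(g_1,…,g_m)) is either a constant function or takes every value of K. -/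
/-!
Over a field every element of `SL_n` lies on a polynomial path `γ ∈ SL_n(K[X])` starting at `1`:
transvections `t ↦ transvection (t • c)` give such paths, the paths form a subgroup, and
Whitehead's decomposition of `diag(a, a⁻¹)` into transvections together with Gaussian elimination
shows that transvections generate `SL_n(K)`. Joining two tuples `g`, `g'` by such paths, the
coefficient `χ_i` of the word evaluated along the path is a polynomial in `t`. Over an
algebraically closed field a polynomial omitting a value is constant, so if `χ_i ∘ w̃` is not
surjective it takes the same value at `g` and `g'`.
-/

open Matrix Polynomial

theorem Polynomial.eval_eq_of_forall_eval_ne {K : Type*} [Field K] [IsAlgClosed K] {P : K[X]}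
    {a : K} (h : ∀ t, P.eval t ≠ a) (t t' : K) : P.eval t = P.eval t' := by
  have hdeg : P.natDegree = 0 := by
    by_contra hdeg
    obtain ⟨t, ht⟩ := IsAlgClosed.eval_surjective hdeg a
    exact h t ht
  rw [eq_C_of_natDegree_eq_zero hdeg]
  simp

theorem Matrix.charpoly_coeff_map_eval {ι R : Type*} [Fintype ι] [DecidableEq ι] [CommRing R]
    (M : Matrix ι ι R[X]) (t : R) (k : ℕ) :
    (M.map (eval t)).charpoly.coeff k = (M.charpoly.coeff k).eval t := by
  simpa using congr_arg (coeff · k) (charpoly_map M (evalRingHom t))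

theorem Monoid.Coprod.map_lift_freeGroupLift {α N H H' : Type*} [Monoid N] [Group H] [Group H']
    (φ : H →* H') (x : α → H) (ψ : N →* H) (w : Monoid.Coprod (FreeGroup α) N) :
    φ (lift (FreeGroup.lift x) ψ w) = lift (FreeGroup.lift (φ ∘ x)) (φ.comp ψ) w := by
  rw [← MonoidHom.comp_apply, comp_lift]
  congr 2
  exact FreeGroup.ext_hom _ _ fun a ↦ by simp

namespace Matrix.SpecialLinearGroup

variable {ι : Type*} [Fintype ι] [DecidableEq ι]

theorem diag2n_eq_transvection_mul {K : Type*} [Field K] {i j : ι} (hij : i ≠ j) (a : K)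
    (ha : a ≠ 0) :
    diag2n hij a ha = transvection hij a * transvection hij.symm (-a⁻¹) * transvection hij a *
      transvection hij (-1) * transvection hij.symm 1 * transvection hij (-1) := by
  ext k l
  simp only [diag2n_coe, coe_mul, transvection_coe, mul_add, add_mul, mul_one, one_mul,
    single_mul_single_same, single_mul_single_of_ne _ _ _ _ hij,
    single_mul_single_of_ne _ _ _ _ hij.symm, add_zero]
  obtain hki | hki := eq_or_ne k i <;> obtain hli | hli := eq_or_ne l i <;>
    obtain hkj | hkj := eq_or_ne k j <;> obtain hlj | hlj := eq_or_ne l j <;>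
    simp_all [add_apply, diagonal_apply, one_apply, Ne.symm]

variable {R : Type*} [CommRing R]

theorem eq_one_of_subsingleton [Subsingleton ι] (g : SpecialLinearGroup ι R) : g = 1 := by
  obtain hι | ⟨⟨i⟩⟩ := isEmpty_or_nonempty ι
  · exact Subsingleton.elim _ _
  · have := uniqueOfSubsingleton i
    ext k l
    rw [Subsingleton.elim k default, Subsingleton.elim l default]
    simpa [det_unique] using g.2

theorem map_transvection {S : Type*} [CommRing S] (f : R →+* S) {i j : ι} (hij : i ≠ j)
    (c : R) :
    map f (transvection hij c) = transvection hij (f c) := by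
  ext : 1
  simp [transvection_coe, one_apply, single_apply, apply_ite f]

theorem map_evalRingHom_map_C (t : R) (g : SpecialLinearGroup ι R) :
    map (evalRingHom t) (map C g) = g := by
  ext
  simp

theorem map_evalRingHom_lift_freeGroupLift_map_C {α : Type*}
    (Γ : α → SpecialLinearGroup ι R[X]) (t : R)
    (w : Monoid.Coprod (FreeGroup α) (SpecialLinearGroup ι R)) :
    map (evalRingHom t) (Monoid.Coprod.lift (FreeGroup.lift Γ) (map C) w) =
      Monoid.Coprod.lift (FreeGroup.lift fun j ↦ map (evalRingHom t) (Γ j))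
        (MonoidHom.id _) w := by
  rw [Monoid.Coprod.map_lift_freeGroupLift]
  congr 2
  exact MonoidHom.ext (map_evalRingHom_map_C t)

variable (ι R) in
noncomputable def polynomialPathsFromOne : Subgroup (SpecialLinearGroup ι R) :=
  (map (evalRingHom 0) : SpecialLinearGroup ι R[X] →* _).ker.map (map (evalRingHom 1))

theorem mem_polynomialPathsFromOne {g : SpecialLinearGroup ι R} :
    g ∈ polynomialPathsFromOne ι R ↔
      ∃ γ : SpecialLinearGroup ι R[X],
        map (evalRingHom 0) γ = 1 ∧ map (evalRingHom 1) γ = g :=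
  Iff.rfl

theorem transvection_mem_polynomialPathsFromOne {i j : ι} (hij : i ≠ j) (c : R) :
    transvection hij c ∈ polynomialPathsFromOne ι R :=
  mem_polynomialPathsFromOne.2 ⟨transvection hij (C c * X), by simp [map_transvection],
    by simp [map_transvection]⟩

theorem polynomialPathsFromOne_eq_top {K : Type*} [Field K] :
    polynomialPathsFromOne ι K = ⊤ := by
  refine eq_top_iff.2 fun g _ ↦ ?_
  cases subsingleton_or_nontrivial ι
  · rw [eq_one_of_subsingleton g]
    exact one_mem _
  refine diagonal_transvection_induction' (· ∈ polynomialPathsFromOne ι K) g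
    (fun i j hij c hc ↦ ?_) (fun i j hij c ↦ transvection_mem_polynomialPathsFromOne hij c)
    (fun _ _ ↦ mul_mem)
  rw [diag2n_eq_transvection_mul]
  repeat' refine mul_mem ?_ ?_
  all_goals exact transvection_mem_polynomialPathsFromOne _ _

theorem exists_polynomialPath {K : Type*} [Field K] (g g' : SpecialLinearGroup ι K) :
    ∃ γ : SpecialLinearGroup ι K[X],
      map (evalRingHom 0) γ = g ∧ map (evalRingHom 1) γ = g' := by
  obtain ⟨γ, hγ₀, hγ₁⟩ := mem_polynomialPathsFromOne.1
    (show g' * g⁻¹ ∈ polynomialPathsFromOne ι K by simp [polynomialPathsFromOne_eq_top])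
  exact ⟨γ * map C g, by simp [hγ₀, map_evalRingHom_map_C],
    by simp [hγ₁, map_evalRingHom_map_C]⟩

end Matrix.SpecialLinearGroup

theorem charpoly_coeff_of_word_with_constants_constant_or_surjective_general
    (K : Type*) [Field K] [IsAlgClosed K] (n m : ℕ)
    (w : Monoid.Coprod (FreeGroup (Fin m)) (Matrix.SpecialLinearGroup (Fin n) K))
    (i : ℕ) :
    (∀ g g' : Fin m → Matrix.SpecialLinearGroup (Fin n) K,
        (((Monoid.Coprod.lift (FreeGroup.lift g) (MonoidHom.id _)) w :
            Matrix.SpecialLinearGroup (Fin n) K) : Matrix (Fin n) (Fin n) K).charpoly.coeff (n - i)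
          = (((Monoid.Coprod.lift (FreeGroup.lift g') (MonoidHom.id _)) w :
            Matrix.SpecialLinearGroup (Fin n) K) : Matrix (Fin n) (Fin n) K).charpoly.coeff (n - i))
    ∨ (∀ a : K, ∃ g : Fin m → Matrix.SpecialLinearGroup (Fin n) K,
        (((Monoid.Coprod.lift (FreeGroup.lift g) (MonoidHom.id _)) w :
            Matrix.SpecialLinearGroup (Fin n) K) : Matrix (Fin n) (Fin n) K).charpoly.coeff (n - i)
          = a) := by
  refine or_iff_not_imp_right.2 fun hnot g g' ↦ ?_
  simp only [not_forall, not_exists] at hnot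
  obtain ⟨a, ha⟩ := hnot
  choose Γ hΓ₀ hΓ₁ using fun j ↦ SpecialLinearGroup.exists_polynomialPath (g j) (g' j)
  obtain rfl := funext hΓ₀
  obtain rfl := funext hΓ₁
  set P := ((Monoid.Coprod.lift (FreeGroup.lift Γ) (SpecialLinearGroup.map C) w :
    SpecialLinearGroup (Fin n) K[X]) : Matrix (Fin n) (Fin n) K[X]).charpoly.coeff (n - i)
  have hP (t : K) : ((Monoid.Coprod.lift
      (FreeGroup.lift fun j ↦ SpecialLinearGroup.map (evalRingHom t) (Γ j))
      (MonoidHom.id _) w : SpecialLinearGroup (Fin n) K) :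
        Matrix (Fin n) (Fin n) K).charpoly.coeff (n - i) = P.eval t := by
    rw [← SpecialLinearGroup.map_evalRingHom_lift_freeGroupLift_map_C]
    exact charpoly_coeff_map_eval _ t _
  rw [hP, hP]
  exact eval_eq_of_forall_eval_ne (fun t ht ↦ ha _ ((hP t).trans ht)) 0 1

/-- Theorem (words with constants and coefficients of the characteristic polynomial):
for a word with constants `w` in `SL_n(K)` (an element of the free product of the free
group on `m` generators with `SL_n(K)`), each coefficient function
`(g₁,…,g_m) ↦ χ_i(w̃(g₁,…,g_m))` (the coefficient of `λ^(n-i)` in the characteristic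
polynomial of the evaluation) is either constant or takes every value of `K`. -/
theorem charpoly_coeff_of_word_with_constants_constant_or_surjective
    (K : Type*) [Field K] [IsAlgClosed K] (n m : ℕ) (hn : 1 ≤ n) (hm : 1 ≤ m)
    (w : Monoid.Coprod (FreeGroup (Fin m)) (Matrix.SpecialLinearGroup (Fin n) K))
    (i : ℕ) (hi : 1 ≤ i) (hin : i ≤ n) :
    (∀ g g' : Fin m → Matrix.SpecialLinearGroup (Fin n) K,
        (((Monoid.Coprod.lift (FreeGroup.lift g) (MonoidHom.id _)) w :
            Matrix.SpecialLinearGroup (Fin n) K) : Matrix (Fin n) (Fin n) K).charpoly.coeff (n - i)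
          = (((Monoid.Coprod.lift (FreeGroup.lift g') (MonoidHom.id _)) w :
            Matrix.SpecialLinearGroup (Fin n) K) : Matrix (Fin n) (Fin n) K).charpoly.coeff (n - i))
    ∨ (∀ a : K, ∃ g : Fin m → Matrix.SpecialLinearGroup (Fin n) K,
        (((Monoid.Coprod.lift (FreeGroup.lift g) (MonoidHom.id _)) w :
            Matrix.SpecialLinearGroup (Fin n) K) : Matrix (Fin n) (Fin n) K).charpoly.coeff (n - i)
          = a) :=
  charpoly_coeff_of_word_with_constants_constant_or_surjective_general K n m w i
end

section
/- Let K be an algebraically closed field and let n ≥ 1, m ≥ 1. Let F be a polynomial function on the space M_n(K)^m of m-tuples of n×n matrices (i.e. F is given by a polynomial in the entries of the m matrices) which is homogeneous on each component: there exist natural numbers d_1,…,d_m such that F(g_1,…,g_{i−1}, c·g_i, g_{i+1},…,g_m) = c^{d_i}·F(g_1,…,g_m) for every tuple (g_1,…,g_m) ∈ M_n(K)^m, every c ∈ K, and every i. Then the restriction of F to SL_n(K)^m (tuples of matrices of determinant 1) is either a constant function or takes every value of K. -/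
/-!
Every matrix of determinant one is joined to `1` by a polynomial curve `t ↦ C(t)` inside
`SL_n(K)`, and such curves can be multiplied: transvections `1 + c E_ij` lie on the line
`1 + t c E_ij`, diagonal matrices of determinant one are products of transvections (Whitehead's
lemma), and by Gaussian elimination every matrix of determinant one is a product of transvections
and a diagonal one. Translating, any two points of `SL_n(K)^m` lie on a polynomial curve, along
which a polynomial function becomes a polynomial `q(t)`. If the function takes different values
at the two points, `q` is non-constant, hence surjective since `K` is algebraically closed.
-/

open Matrix Polynomial

def IsPolyCurveConnected {σ R : Type*} [CommSemiring R] (X : Set (σ → R)) : Prop :=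
  ∀ x ∈ X, ∀ y ∈ X, ∃ γ : σ → R[X],
    (∀ t, (fun v => (γ v).eval t) ∈ X) ∧ (fun v => (γ v).eval 0) = x ∧
      (fun v => (γ v).eval 1) = y

theorem MvPolynomial.polynomial_eval_aeval {σ R : Type*} [CommSemiring R] (γ : σ → R[X])
    (P : MvPolynomial σ R) (t : R) :
    (aeval γ P).eval t = eval (fun v => (γ v).eval t) P := by
  rw [aeval_def, polynomial_eval_eval₂]
  congr 1
  ext
  simp

theorem IsPolyCurveConnected.eval_const_or_surjective {σ K : Type*} [Field K] [IsAlgClosed K]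
    {X : Set (σ → K)} (hX : IsPolyCurveConnected X) (P : MvPolynomial σ K) :
    (∀ x ∈ X, ∀ y ∈ X, MvPolynomial.eval x P = MvPolynomial.eval y P) ∨
      ∀ a, ∃ x ∈ X, MvPolynomial.eval x P = a := by
  rw [or_iff_not_imp_left]
  push Not
  rintro ⟨x, hx, y, hy, hxy⟩ a
  obtain ⟨γ, hγX, rfl, rfl⟩ := hX x hx y hy
  simp only [← MvPolynomial.polynomial_eval_aeval] at hxy ⊢
  have hq : (MvPolynomial.aeval γ P).natDegree ≠ 0 := fun h => hxy <| by
    rw [eq_C_of_natDegree_eq_zero h, eval_C, eval_C]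
  obtain ⟨t, ht⟩ := IsAlgClosed.eval_surjective hq a
  exact ⟨_, hγX t, (MvPolynomial.polynomial_eval_aeval γ P t).symm.trans ht⟩

namespace Matrix

variable {n : Type*} [Fintype n] [DecidableEq n]

theorem det_map_eval {R : Type*} [CommRing R] (C : Matrix n n R[X]) (t : R) :
    (C.map (eval t)).det = C.det.eval t := by
  rw [← coe_evalRingHom, RingHom.map_det]
  rfl

theorem transvection_map {R S : Type*} [CommRing R] [CommRing S] (f : R →+* S) (i j : n)
    (c : R) : (transvection i j c).map f = transvection i j (f c) := by
  rw [transvection, transvection, ← RingHom.mapMatrix_apply, map_add, map_one,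
    RingHom.mapMatrix_apply, map_single]

variable (n) in
def polyCurveSubmonoid (R : Type*) [CommRing R] : Submonoid (Matrix n n R) where
  carrier := {M | ∃ C : Matrix n n R[X], C.det = 1 ∧ C.map (eval 0) = 1 ∧ C.map (eval 1) = M}
  one_mem' := ⟨1, det_one, by simp, by simp⟩
  mul_mem' := by
    rintro _ _ ⟨C, hC, hC₀, rfl⟩ ⟨D, hD, hD₀, rfl⟩
    refine ⟨C * D, by rw [det_mul, hC, hD, one_mul], ?_, ?_⟩
    · rw [← coe_evalRingHom, Matrix.map_mul, coe_evalRingHom, hC₀, hD₀, one_mul]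
    · rw [← coe_evalRingHom, Matrix.map_mul]

theorem transvection_mem_polyCurveSubmonoid {R : Type*} [CommRing R] {i j : n} (hij : i ≠ j)
    (c : R) : transvection i j c ∈ polyCurveSubmonoid n R := by
  refine ⟨transvection i j (C c * X), det_transvection_of_ne _ _ hij _, ?_, ?_⟩ <;>
    rw [← coe_evalRingHom, transvection_map] <;> simp

variable {K : Type*} [Field K]

theorem diagonal_mulSingle_mul_mulSingle_inv {i j : n} (hij : i ≠ j) {a : K} (ha : a ≠ 0) :
    diagonal (Pi.mulSingle i a * Pi.mulSingle j a⁻¹) = transvection i j a *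
      transvection j i (-a⁻¹) * transvection i j (a - 1) * transvection j i 1 *
      transvection i j (-1) := by
  have h₁ : ∀ (p q : n) (c e : K), single p i c * single j q e = 0 := fun p q c e =>
    single_mul_single_of_ne _ _ _ _ hij _
  have h₂ : ∀ (p q : n) (c e : K), single p j c * single i q e = 0 := fun p q c e =>
    single_mul_single_of_ne _ _ _ _ hij.symm _
  simp only [transvection, add_mul, mul_add, one_mul, mul_one, single_mul_single_same, h₁, h₂,
    add_zero]
  ext p q
  have trichotomy : ∀ x : n, x = i ∨ x = j ∨ (x ≠ i ∧ x ≠ j ∧ i ≠ x ∧ j ≠ x) := by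
    intro x
    by_cases x = i <;> by_cases x = j <;> simp_all [eq_comm]
  rcases trichotomy p with hp | hp | hp <;> rcases trichotomy q with hq | hq | hq <;>
    simp [one_apply, diagonal_apply, hij, hij.symm, ha, hp, hq] <;> field_simp <;> ring

theorem diagonal_mem_polyCurveSubmonoid {d : n → K} (hd : ∏ i, d i = 1) :
    diagonal d ∈ polyCurveSubmonoid n K := by
  cases isEmpty_or_nonempty n with
  | inl _ => simpa only [Subsingleton.elim (diagonal d) 1] using one_mem _
  | inr hn =>
  obtain ⟨j⟩ := hn
  have hd₀ (i : n) : d i ≠ 0 :=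
    Finset.prod_ne_zero_iff.mp (hd ▸ one_ne_zero) i (Finset.mem_univ i)
  have hsplit : d = ∏ i, Pi.mulSingle i (d i) * Pi.mulSingle j (d i)⁻¹ := by
    have h := map_prod (MonoidHom.mulSingle (fun _ => K) j) (fun i => (d i)⁻¹) Finset.univ
    simp only [MonoidHom.mulSingle_apply, Finset.prod_inv_distrib, hd, inv_one,
      Pi.mulSingle_one] at h
    rw [Finset.prod_mul_distrib, Finset.univ_prod_mulSingle, ← h, mul_one]
  rw [hsplit]
  refine Finset.prod_induction _ (fun e => diagonal e ∈ polyCurveSubmonoid n K)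
    (fun a b ha hb => ?_) (by simp) fun i _ => ?_
  · rw [Pi.mul_def, ← diagonal_mul_diagonal]
    exact mul_mem ha hb
  rcases eq_or_ne i j with rfl | hij
  · simp [← Pi.mulSingle_mul, mul_inv_cancel₀ (hd₀ i)]
  · rw [diagonal_mulSingle_mul_mulSingle_inv hij (hd₀ i)]
    refine mul_mem (mul_mem (mul_mem (mul_mem ?_ ?_) ?_) ?_) ?_ <;>
      exact transvection_mem_polyCurveSubmonoid (by first | exact hij | exact hij.symm) _

theorem mem_polyCurveSubmonoid_of_det_eq_one {M : Matrix n n K} (hM : M.det = 1) :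
    M ∈ polyCurveSubmonoid n K := by
  obtain ⟨L, L', D, rfl⟩ := Pivot.exists_list_transvec_mul_diagonal_mul_list_transvec M
  have hL (L : List (TransvectionStruct n K)) :
      (L.map TransvectionStruct.toMatrix).prod ∈ polyCurveSubmonoid n K := by
    refine Submonoid.list_prod_mem _ ?_
    simp only [List.mem_map]
    rintro _ ⟨t, -, rfl⟩
    exact transvection_mem_polyCurveSubmonoid t.hij t.c
  simp only [det_mul, TransvectionStruct.det_toMatrix_prod, det_diagonal, one_mul, mul_one] at hM
  exact mul_mem (mul_mem (hL L) (diagonal_mem_polyCurveSubmonoid hM)) (hL L')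

theorem exists_polyCurve_of_det_eq_one {M M' : Matrix n n K} (hM : M.det = 1)
    (hM' : M'.det = 1) :
    ∃ C : Matrix n n K[X], C.det = 1 ∧ C.map (eval 0) = M ∧ C.map (eval 1) = M' := by
  obtain ⟨C, hC, hC₀, hC₁⟩ :=
    mem_polyCurveSubmonoid_of_det_eq_one (M := M' * M⁻¹) (by simp [hM, hM'])
  have hconst (t : K) : (M.map Polynomial.C).map (eval t) = M := by
    ext
    simp
  refine ⟨C * M.map Polynomial.C, ?_, ?_, ?_⟩
  · rw [det_mul, hC, one_mul, ← RingHom.mapMatrix_apply, ← RingHom.map_det, hM, map_one]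
  · rw [← coe_evalRingHom, Matrix.map_mul, coe_evalRingHom, hC₀, hconst, one_mul]
  · rw [← coe_evalRingHom, Matrix.map_mul, coe_evalRingHom, hC₁, hconst,
      nonsing_inv_mul_cancel_right _ _ (by simp [hM])]

theorem isPolyCurveConnected_uncurry_det_eq_one (ι : Type*) :
    IsPolyCurveConnected ((fun g (p : ι × n × n) => g p.1 p.2.1 p.2.2) ''
      {g : ι → Matrix n n K | ∀ i, (g i).det = 1}) := by
  rintro _ ⟨g, hg, rfl⟩ _ ⟨g', hg', rfl⟩
  choose C hC hC₀ hC₁ using fun i => exists_polyCurve_of_det_eq_one (hg i) (hg' i)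
  refine ⟨fun p => C p.1 p.2.1 p.2.2,
    fun t => ⟨fun i => (C i).map (eval t), fun i => by rw [det_map_eval, hC, eval_one], rfl⟩,
    ?_, ?_⟩
  · simp only [← hC₀]
    rfl
  · simp only [← hC₁]
    rfl

end Matrix

theorem homogeneous_polynomial_on_SLn_constant_or_surjective_general
    (K : Type*) [Field K] [IsAlgClosed K] (n m : ℕ)
    (P : MvPolynomial (Fin m × Fin n × Fin n) K)
    (F : (Fin m → Matrix (Fin n) (Fin n) K) → K)
    (hF : ∀ g, F g = MvPolynomial.eval (fun p => g p.1 p.2.1 p.2.2) P) :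
    (∀ g g' : Fin m → Matrix (Fin n) (Fin n) K,
        (∀ i, (g i).det = 1) → (∀ i, (g' i).det = 1) → F g = F g')
    ∨ (∀ a : K, ∃ g : Fin m → Matrix (Fin n) (Fin n) K,
        (∀ i, (g i).det = 1) ∧ F g = a) := by
  rcases (Matrix.isPolyCurveConnected_uncurry_det_eq_one (Fin m)).eval_const_or_surjective P with
    hconst | hsurj
  · left
    intro g g' hg hg'
    rw [hF, hF]
    exact hconst _ ⟨g, hg, rfl⟩ _ ⟨g', hg', rfl⟩
  · right
    intro a
    obtain ⟨_, ⟨g, hg, rfl⟩, hga⟩ := hsurj a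
    exact ⟨g, hg, (hF g).trans hga⟩

/-- A polynomial function on `M_n(K)^m` which is homogeneous in each matrix component
is, when restricted to tuples of determinant-one matrices, either constant or takes
every value of the algebraically closed field `K`. -/
theorem homogeneous_polynomial_on_SLn_constant_or_surjective
    (K : Type*) [Field K] [IsAlgClosed K] (n m : ℕ) (hn : 1 ≤ n) (hm : 1 ≤ m)
    (P : MvPolynomial (Fin m × Fin n × Fin n) K)
    (F : (Fin m → Matrix (Fin n) (Fin n) K) → K)
    (hF : ∀ g, F g = MvPolynomial.eval (fun p => g p.1 p.2.1 p.2.2) P)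
    (d : Fin m → ℕ)
    (hhom : ∀ (g : Fin m → Matrix (Fin n) (Fin n) K) (c : K) (i : Fin m),
      F (Function.update g i (c • g i)) = c ^ d i * F g) :
    (∀ g g' : Fin m → Matrix (Fin n) (Fin n) K,
        (∀ i, (g i).det = 1) → (∀ i, (g' i).det = 1) → F g = F g')
    ∨ (∀ a : K, ∃ g : Fin m → Matrix (Fin n) (Fin n) K,
        (∀ i, (g i).det = 1) ∧ F g = a) :=
  homogeneous_polynomial_on_SLn_constant_or_surjective_general K n m P F hF
end

section
/- For every complex number a there exist matrices g_1, g_2 ∈ SL_2(ℂ) such that trace(g_1·g_2·g_1⁻¹·g_2⁻¹) = a. -/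
/-! The commutator of the unipotent matrices `!![1, b; 0, 1]` and `!![1, 0; c, 1]` has trace
`2 + (b * c) ^ 2`; over the algebraically closed field `ℂ` every `a - 2` is a square. -/

open scoped MatrixGroups

namespace Matrix.SpecialLinearGroup

variable {R : Type*} [CommRing R]

def upperUnipotent (b : R) : SL(2, R) := ⟨!![1, b; 0, 1], by simp [det_fin_two_of]⟩

def lowerUnipotent (c : R) : SL(2, R) := ⟨!![1, 0; c, 1], by simp [det_fin_two_of]⟩

@[simp]
theorem coe_upperUnipotent (b : R) :
    (upperUnipotent b : Matrix (Fin 2) (Fin 2) R) = !![1, b; 0, 1] := rfl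

@[simp]
theorem coe_lowerUnipotent (c : R) :
    (lowerUnipotent c : Matrix (Fin 2) (Fin 2) R) = !![1, 0; c, 1] := rfl

@[simp]
theorem upperUnipotent_inv (b : R) : (upperUnipotent b)⁻¹ = upperUnipotent (-b) :=
  Subtype.ext <| by simp [coe_inv, adjugate_fin_two]

@[simp]
theorem lowerUnipotent_inv (c : R) : (lowerUnipotent c)⁻¹ = lowerUnipotent (-c) :=
  Subtype.ext <| by simp [coe_inv, adjugate_fin_two]

theorem trace_commutator_upperUnipotent_lowerUnipotent (b c : R) :
    trace ((upperUnipotent b * lowerUnipotent c * (upperUnipotent b)⁻¹ * (lowerUnipotent c)⁻¹ :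
      SL(2, R)) : Matrix (Fin 2) (Fin 2) R) = 2 + (b * c) ^ 2 := by
  simp [trace_fin_two]
  ring

end Matrix.SpecialLinearGroup

open Matrix.SpecialLinearGroup in
/-- For every complex number `a` there exist `g₁ g₂ ∈ SL₂(ℂ)` such that the trace of their
commutator `g₁ * g₂ * g₁⁻¹ * g₂⁻¹` equals `a`. -/
theorem trace_commutator_surjective_SL2C (a : ℂ) :
    ∃ g₁ g₂ : Matrix.SpecialLinearGroup (Fin 2) ℂ,
      Matrix.trace ((g₁ * g₂ * g₁⁻¹ * g₂⁻¹ :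
        Matrix.SpecialLinearGroup (Fin 2) ℂ) : Matrix (Fin 2) (Fin 2) ℂ) = a := by
  obtain ⟨c, hc⟩ := IsAlgClosed.exists_pow_nat_eq (a - 2) two_pos
  refine ⟨upperUnipotent 1, lowerUnipotent c, ?_⟩
  rw [trace_commutator_upperUnipotent_lowerUnipotent, one_mul, hc]
  ring
end

section
/- Let λ ∈ ℂ with λ ≠ 0 and λ² ≠ 1, set t = [[λ, 0], [0, λ⁻¹]], and let g ∈ SL_2(ℂ). If t·g·t⁻¹·g⁻¹ = −I, then λ = i or λ = −i, and there exists μ ∈ ℂ, μ ≠ 0, such that g = [[0, μ], [−μ⁻¹, 0]]. -/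
/-!
Conjugating by the diagonal matrix `t = diag(λ, λ⁻¹)` multiplies the entry `g i j` by
`t i / t j`, so `t g t⁻¹ = -g` means `(t i + t j) g i j = 0` for all `i, j`. On the diagonal
this kills `g`, and then `det g = 1` forces the off-diagonal entries to be nonzero, whence
`λ + λ⁻¹ = 0`, i.e. `λ² = -1`.
-/

namespace Matrix

variable {n R : Type*} [Fintype n] [DecidableEq n] [CommRing R]

theorem mul_eq_neg_mul_of_commutator_eq_neg_one {t g : Matrix n n R} (ht : IsUnit t.det)
    (hg : IsUnit g.det) (h : t * g * t⁻¹ * g⁻¹ = -1) : t * g = -(g * t) := by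
  have hconj : t * g * t⁻¹ = -g := by
    rw [← nonsing_inv_mul_cancel_right g (t * g * t⁻¹) hg, h, neg_one_mul]
  rw [← nonsing_inv_mul_cancel_right t (t * g) ht, hconj, neg_mul]

theorem diagonal_mul_eq_neg_mul_diagonal_iff {d : n → R} {g : Matrix n n R} :
    diagonal d * g = -(g * diagonal d) ↔ ∀ i j, (d i + d j) * g i j = 0 := by
  simp only [← Matrix.ext_iff, diagonal_mul, mul_diagonal, neg_apply]
  refine forall₂_congr fun i j => ?_
  constructor <;> intro h <;> linear_combination h

theorem fin_two_eq_of_det_eq_one_of_diag_eq_zero {K : Type*} [Field K]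
    {g : Matrix (Fin 2) (Fin 2) K} (hg : g.det = 1) (h₀ : g 0 0 = 0) (h₁ : g 1 1 = 0) :
    g 0 1 ≠ 0 ∧ g = !![0, g 0 1; -(g 0 1)⁻¹, 0] := by
  rw [det_fin_two, h₀, h₁] at hg
  have hb : g 0 1 ≠ 0 := by
    rintro hb
    simp [hb] at hg
  refine ⟨hb, ?_⟩
  have hc : g 1 0 = -(g 0 1)⁻¹ := by
    field_simp
    linear_combination -hg
  ext i j
  fin_cases i <;> fin_cases j <;> simp [h₀, h₁, hc]

end Matrix

open Matrix

theorem commutator_eq_neg_one_SL2C_general (l : ℂ) (hl : l ≠ 0)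
    (g : Matrix (Fin 2) (Fin 2) ℂ) (hg : g.det = 1)
    (hcomm : (!![l, 0; 0, l⁻¹] : Matrix (Fin 2) (Fin 2) ℂ) * g *
      (!![l, 0; 0, l⁻¹] : Matrix (Fin 2) (Fin 2) ℂ)⁻¹ * g⁻¹ = -1) :
    (l = Complex.I ∨ l = -Complex.I) ∧ ∃ μ : ℂ, μ ≠ 0 ∧ g = !![0, μ; -μ⁻¹, 0] := by
  have ht : (!![l, 0; 0, l⁻¹] : Matrix (Fin 2) (Fin 2) ℂ) = diagonal ![l, l⁻¹] := by
    simp [diagonal_fin_two]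
  have ht_det : IsUnit (diagonal ![l, l⁻¹]).det := by simp [hl]
  rw [ht] at hcomm
  have hanti := diagonal_mul_eq_neg_mul_diagonal_iff.1 <|
    mul_eq_neg_mul_of_commutator_eq_neg_one ht_det (by simp [hg]) hcomm
  have ha : g 0 0 = 0 := by simpa [hl] using hanti 0 0
  have hd : g 1 1 = 0 := by simpa [hl] using hanti 1 1
  obtain ⟨hb, hg_eq⟩ := fin_two_eq_of_det_eq_one_of_diag_eq_zero hg ha hd
  have hsum : l + l⁻¹ = 0 := by simpa [hb] using hanti 0 1
  have hsq : l ^ 2 = Complex.I ^ 2 := by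
    field_simp at hsum
    linear_combination hsum - Complex.I_sq
  exact ⟨sq_eq_sq_iff_eq_or_eq_neg.1 hsq, g 0 1, hb, hg_eq⟩

/-- If `t = [[λ,0],[0,λ⁻¹]]` with `λ ≠ 0`, `λ² ≠ 1`, and `g` has determinant `1`, and the
commutator `t * g * t⁻¹ * g⁻¹` equals `-I`, then `λ = ±i` and `g = [[0,μ],[−μ⁻¹,0]]` for
some `μ ≠ 0`. -/
theorem commutator_eq_neg_one_SL2C (l : ℂ) (hl : l ≠ 0) (hl2 : l ^ 2 ≠ 1)
    (g : Matrix (Fin 2) (Fin 2) ℂ) (hg : g.det = 1)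
    (hcomm : (!![l, 0; 0, l⁻¹] : Matrix (Fin 2) (Fin 2) ℂ) * g *
      (!![l, 0; 0, l⁻¹] : Matrix (Fin 2) (Fin 2) ℂ)⁻¹ * g⁻¹ = -1) :
    (l = Complex.I ∨ l = -Complex.I) ∧ ∃ μ : ℂ, μ ≠ 0 ∧ g = !![0, μ; -μ⁻¹, 0] :=
  commutator_eq_neg_one_SL2C_general l hl g hg hcomm
end

section
/- Let x, y ∈ SL_2(ℂ) and let m, n be positive integers. If x^m ≠ I, x^m ≠ −I, y^n ≠ I, y^n ≠ −I, and x^m commutes with y^n (i.e. x^m·y^n = y^n·x^m), then x commutes with y (i.e. x·y = y·x). -/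
/-!
Commuting with a non-scalar `2 × 2` matrix `A` is a linear condition on the image `(b, c, a - d)`
of a matrix modulo scalars: that image must be parallel to the one of `A`, i.e. their cross
product vanishes. Hence everything commuting with `A` commutes pairwise. In `SL₂` the non-scalar
elements are those other than `±1`, so `x` commutes with `y ^ n` through `x ^ m`, and then with `y`
through `y ^ n`.
-/

open Matrix

theorem cross_eq_zero_of_cross_eq_zero_of_cross_eq_zero {F : Type*} [Field F] {u v w : Fin 3 → F}
    (hu : u ≠ 0) (hv : u ⨯₃ v = 0) (hw : u ⨯₃ w = 0) : v ⨯₃ w = 0 := by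
  obtain ⟨a, rfl⟩ : ∃ a : F, a • u = v := by
    by_contra! h
    exact crossProduct_ne_zero_iff_linearIndependent.mpr ((LinearIndependent.pair_iff' hu).mpr h) hv
  rw [map_smul, LinearMap.smul_apply, hw, smul_zero]

namespace Matrix

variable {R : Type*} [CommRing R]

/-- The coordinates `(b, c, a - d)` of `!![a, b; c, d]` modulo the scalar matrices. -/
def finTwoModScalar (A : Matrix (Fin 2) (Fin 2) R) : Fin 3 → R :=
  ![A 0 1, A 1 0, A 0 0 - A 1 1]

theorem finTwoModScalar_eq_zero_iff {A : Matrix (Fin 2) (Fin 2) R} :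
    finTwoModScalar A = 0 ↔ A = scalar (Fin 2) (A 0 0) := by
  rw [← Matrix.ext_iff, finTwoModScalar]
  simp [Fin.forall_fin_two, sub_eq_zero, cons_eq_zero_iff, @eq_comm _ (A 1 1), and_comm]

theorem commute_iff_finTwoModScalar_cross_eq_zero {A B : Matrix (Fin 2) (Fin 2) R} :
    Commute A B ↔ finTwoModScalar A ⨯₃ finTwoModScalar B = 0 := by
  rw [Commute, SemiconjBy, ← Matrix.ext_iff, cross_apply]
  simp only [finTwoModScalar, Fin.forall_fin_two, mul_apply, Fin.sum_univ_two, Fin.isValue,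
    cons_val_zero, cons_val_one, cons_val, cons_eq_zero_iff, sub_eq_zero, zero_empty, and_true]
  constructor
  · rintro ⟨⟨h00, h01⟩, h10, -⟩
    exact ⟨by linear_combination h10, by linear_combination h01, by linear_combination h00⟩
  · rintro ⟨h10, h01, h00⟩
    exact ⟨⟨by linear_combination h00, by linear_combination h01⟩, by linear_combination h10,
      by linear_combination -h00⟩

theorem commute_of_commute_of_commute_fin_two {K : Type*} [Field K]
    {A B C : Matrix (Fin 2) (Fin 2) K} (hA : finTwoModScalar A ≠ 0)
    (hB : Commute A B) (hC : Commute A C) : Commute B C := by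
  rw [commute_iff_finTwoModScalar_cross_eq_zero] at hB hC ⊢
  exact cross_eq_zero_of_cross_eq_zero_of_cross_eq_zero hA hB hC

namespace SpecialLinearGroup

theorem finTwoModScalar_ne_zero [IsDomain R] {g : SpecialLinearGroup (Fin 2) R}
    (h1 : (g : Matrix (Fin 2) (Fin 2) R) ≠ 1) (h2 : (g : Matrix (Fin 2) (Fin 2) R) ≠ -1) :
    finTwoModScalar (g : Matrix (Fin 2) (Fin 2) R) ≠ 0 := by
  intro h
  rw [finTwoModScalar_eq_zero_iff] at h
  have hdet : g 0 0 ^ 2 = 1 := by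
    have := g.det_coe
    rw [h, det_fin_two] at this
    simpa [sq] using this
  rcases sq_eq_one_iff.mp hdet with h' | h'
  · exact h1 (by rw [h, h', map_one])
  · exact h2 (by rw [h, h', map_neg, map_one])

theorem commute_of_commute_of_commute_fin_two {K : Type*} [Field K]
    {g a b : SpecialLinearGroup (Fin 2) K}
    (h1 : (g : Matrix (Fin 2) (Fin 2) K) ≠ 1) (h2 : (g : Matrix (Fin 2) (Fin 2) K) ≠ -1)
    (ha : Commute g a) (hb : Commute g b) : Commute a b :=
  Subtype.ext <| Matrix.commute_of_commute_of_commute_fin_two (finTwoModScalar_ne_zero h1 h2)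
    (ha.map coeMonoidHom) (hb.map coeMonoidHom)

end SpecialLinearGroup

end Matrix

theorem commute_of_pow_commute_SL2C_general (x y : Matrix.SpecialLinearGroup (Fin 2) ℂ)
    (m n : ℕ)
    (hx1 : (↑(x ^ m) : Matrix (Fin 2) (Fin 2) ℂ) ≠ 1)
    (hx2 : (↑(x ^ m) : Matrix (Fin 2) (Fin 2) ℂ) ≠ -1)
    (hy1 : (↑(y ^ n) : Matrix (Fin 2) (Fin 2) ℂ) ≠ 1)
    (hy2 : (↑(y ^ n) : Matrix (Fin 2) (Fin 2) ℂ) ≠ -1)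
    (hcomm : x ^ m * y ^ n = y ^ n * x ^ m) :
    x * y = y * x := by
  have hxy : Commute x (y ^ n) := SpecialLinearGroup.commute_of_commute_of_commute_fin_two
    hx1 hx2 (Commute.self_pow x m).symm hcomm
  exact SpecialLinearGroup.commute_of_commute_of_commute_fin_two
    hy1 hy2 hxy.symm (Commute.self_pow y n).symm

/-- In `SL₂(ℂ)`: if `x^m` and `y^n` are non-central (different from `±1`) and commute,
then `x` and `y` commute. -/
theorem commute_of_pow_commute_SL2C (x y : Matrix.SpecialLinearGroup (Fin 2) ℂ)
    (m n : ℕ) (hm : 0 < m) (hn : 0 < n)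
    (hx1 : (↑(x ^ m) : Matrix (Fin 2) (Fin 2) ℂ) ≠ 1)
    (hx2 : (↑(x ^ m) : Matrix (Fin 2) (Fin 2) ℂ) ≠ -1)
    (hy1 : (↑(y ^ n) : Matrix (Fin 2) (Fin 2) ℂ) ≠ 1)
    (hy2 : (↑(y ^ n) : Matrix (Fin 2) (Fin 2) ℂ) ≠ -1)
    (hcomm : x ^ m * y ^ n = y ^ n * x ^ m) :
    x * y = y * x :=
  commute_of_pow_commute_SL2C_general x y m n hx1 hx2 hy1 hy2 hcomm
end

section
/- Let λ ∈ ℂ with λ ≠ 0 and λ⁴ ≠ 1, and set s = [[λ, 0], [0, λ⁻¹]]. Let α ∈ ℂ, α ≠ 0, let b ∈ ℂ, and set h = [[0, α], [−α⁻¹, 0]]·[[1, b], [0, 1]]. Define z = s·h·s⁻¹·h⁻¹ and v = z·(s·z·s⁻¹)·z⁻¹·(s·z⁻¹·s⁻¹). Then v is lower unitriangular, i.e. its diagonal entries equal 1 and its (1,2) entry equals 0; moreover v = I if and only if b = 0. -/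
/-!
Write `lowerTri t c = [[t, 0], [c, t⁻¹]]`, so that `s = lowerTri l 0`. These matrices multiply as
`lowerTri t c * lowerTri t' c' = lowerTri (t t') (c t' + t⁻¹ c')`; hence conjugation by `s` divides the
corner by `l²`, and two of them with the same diagonal have the lower unitriangular commutator
`lowerTri 1 ((c - c') (t⁻¹ - t⁻³))`. A direct computation gives `z = lowerTri (l²) c` with
`c = b (1 - l²) / (α² l²)`, so `v = lowerTri 1 V` with `V = (c - c / l²) (l⁻² - l⁻⁶)`, which is a
multiple of `b` by a factor that vanishes only when `l⁴ = 1`.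
-/

section LowerTri

variable {K : Type*} [Field K]

def lowerTri (t c : K) : Matrix (Fin 2) (Fin 2) K := !![t, 0; c, t⁻¹]

theorem lowerTri_mul (t c t' c' : K) :
    lowerTri t c * lowerTri t' c' = lowerTri (t * t') (c * t' + t⁻¹ * c') := by
  simp [lowerTri, mul_comm]

theorem lowerTri_one_zero : lowerTri (1 : K) 0 = 1 := by
  simp [lowerTri, Matrix.one_fin_two]

theorem lowerTri_inv {t : K} (ht : t ≠ 0) (c : K) : (lowerTri t c)⁻¹ = lowerTri t⁻¹ (-c) := by
  refine Matrix.inv_eq_right_inv ?_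
  rw [lowerTri_mul, mul_inv_cancel₀ ht, mul_neg, ← mul_comm t⁻¹, add_neg_cancel, lowerTri_one_zero]

theorem lowerTri_one_eq_one_iff (c : K) : lowerTri 1 c = 1 ↔ c = 0 := by
  refine ⟨fun h => by simpa [lowerTri] using congrFun (congrFun h 1) 0, ?_⟩
  rintro rfl
  exact lowerTri_one_zero

theorem lowerTri_conj_diag {l : K} (hl : l ≠ 0) (t c : K) :
    lowerTri l 0 * lowerTri t c * (lowerTri l 0)⁻¹ = lowerTri t (c / l ^ 2) := by
  rw [lowerTri_inv hl, lowerTri_mul, lowerTri_mul]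
  congr 1
  · field_simp
  · field_simp
    simp

theorem lowerTri_commutator {t : K} (ht : t ≠ 0) (c c' : K) :
    lowerTri t c * lowerTri t c' * (lowerTri t c)⁻¹ * (lowerTri t c')⁻¹ =
      lowerTri 1 ((c - c') * (t⁻¹ - t⁻¹ ^ 3)) := by
  rw [lowerTri_inv ht, lowerTri_inv ht, lowerTri_mul, lowerTri_mul, lowerTri_mul]
  congr 1
  · field_simp
  · field_simp
    ring

theorem inv_weyl_mul_unipotent {α : K} (hα : α ≠ 0) (b : K) :
    (!![0, α; -α⁻¹, 0] * !![1, b; 0, 1])⁻¹ = !![-(b / α), -α; α⁻¹, 0] := by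
  refine Matrix.inv_eq_right_inv ?_
  rw [Matrix.mul_fin_two, Matrix.mul_fin_two, Matrix.one_fin_two]
  field_simp
  simp [hα]

theorem commutator_diag_weyl_mul_unipotent {l α : K} (hl : l ≠ 0) (hα : α ≠ 0) (b : K) :
    lowerTri l 0 * (!![0, α; -α⁻¹, 0] * !![1, b; 0, 1]) * (lowerTri l 0)⁻¹ *
        (!![0, α; -α⁻¹, 0] * !![1, b; 0, 1])⁻¹ =
      lowerTri (l ^ 2) (b * (1 - l ^ 2) / (α ^ 2 * l ^ 2)) := by
  rw [inv_weyl_mul_unipotent hα, lowerTri_inv hl]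
  ext i j
  fin_cases i <;> fin_cases j <;> simp [lowerTri] <;> field_simp
  ring

end LowerTri

/-- For `s = [[λ,0],[0,λ⁻¹]]` with `λ⁴ ≠ 1` and `h = [[0,α],[-α⁻¹,0]]·[[1,b],[0,1]]`
(`α ≠ 0`), setting `z = ⁅s,h⁆` and `v = ⁅z, s z s⁻¹⁆`, the matrix `v` is lower
unitriangular, and `v = 1` if and only if `b = 0`. -/
theorem word_value_lower_unitriangular (l : ℂ) (hl : l ≠ 0) (hl4 : l ^ 4 ≠ 1)
    (α : ℂ) (hα : α ≠ 0) (b : ℂ) :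
    ∀ s h z v : Matrix (Fin 2) (Fin 2) ℂ,
      s = !![l, 0; 0, l⁻¹] →
      h = !![0, α; -α⁻¹, 0] * !![1, b; 0, 1] →
      z = s * h * s⁻¹ * h⁻¹ →
      v = z * (s * z * s⁻¹) * z⁻¹ * (s * z⁻¹ * s⁻¹) →
      (v 0 0 = 1 ∧ v 1 1 = 1 ∧ v 0 1 = 0) ∧ (v = 1 ↔ b = 0) := by
  rintro s h z v hs rfl hz rfl
  obtain rfl : s = lowerTri l 0 := hs
  set c := b * (1 - l ^ 2) / (α ^ 2 * l ^ 2)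
  have hl2 : l ^ 2 ≠ 0 := pow_ne_zero 2 hl
  have hl2_ne_one : l ^ 2 ≠ 1 := fun h => hl4 (by rw [show 4 = 2 * 2 from rfl, pow_mul, h, one_pow])
  obtain rfl : z = lowerTri (l ^ 2) c := hz.trans (commutator_diag_weyl_mul_unipotent hl hα b)
  have hconj : lowerTri l 0 * lowerTri (l ^ 2) c * (lowerTri l 0)⁻¹ = lowerTri (l ^ 2) (c / l ^ 2) :=
    lowerTri_conj_diag hl _ _
  have hconj_inv : lowerTri l 0 * (lowerTri (l ^ 2) c)⁻¹ * (lowerTri l 0)⁻¹ =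
      (lowerTri (l ^ 2) (c / l ^ 2))⁻¹ := by
    rw [lowerTri_inv hl2, lowerTri_inv hl2, lowerTri_conj_diag hl, neg_div]
  have hcorner : (c - c / l ^ 2) * ((l ^ 2)⁻¹ - (l ^ 2)⁻¹ ^ 3) =
      -(b * ((1 - l ^ 2) ^ 2 * (l ^ 4 - 1) / (α ^ 2 * l ^ 10))) := by
    simp only [c]
    field_simp
    ring
  have hfactor : (1 - l ^ 2) ^ 2 * (l ^ 4 - 1) / (α ^ 2 * l ^ 10) ≠ 0 :=
    div_ne_zero (mul_ne_zero (pow_ne_zero 2 (sub_ne_zero.2 hl2_ne_one.symm)) (sub_ne_zero.2 hl4))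
      (mul_ne_zero (pow_ne_zero 2 hα) (pow_ne_zero 10 hl))
  rw [hconj, hconj_inv, lowerTri_commutator hl2, lowerTri_one_eq_one_iff, hcorner, neg_eq_zero,
    mul_eq_zero_iff_right hfactor]
  exact ⟨by simp [lowerTri], Iff.rfl⟩
end

section
/- Let λ ∈ ℂ with λ ≠ 0 and λ² ≠ 1, set g_1 = [[λ, 0], [0, λ⁻¹]], and let g_2 = [[α, β], [γ, δ]] ∈ SL_2(ℂ). Let c = g_1·g_2·g_1⁻¹·g_2⁻¹ be the commutator. Then: (i) trace(c) = 2 if and only if β = 0 or γ = 0; (ii) the (2,1) entry of c is 0 (i.e. c is upper triangular) if and only if γ = 0 or δ = 0; (iii) the (1,2) entry of c is 0 (i.e. c is lower triangular) if and only if β = 0 or α = 0. -/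
/-!
Conjugating `[[α, β], [γ, δ]]` by `diag(λ, λ⁻¹)` multiplies `β` by `λ²` and `γ` by `λ⁻²`, so the
commutator can be written down explicitly using the adjugate formula for the inverse. Its
off-diagonal entries are `(λ² - 1)αβ` and `(λ⁻² - 1)γδ`, and its trace is `2 - (λ - λ⁻¹)²βγ`;
since `λ² ≠ 1` the scalar factors are nonzero.
-/

open Matrix

theorem Matrix.inv_fin_two_of_det_eq_one {R : Type*} [CommRing R] {a b c d : R}
    (hdet : a * d - b * c = 1) : (!![a, b; c, d])⁻¹ = !![d, -b; -c, a] := by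
  rw [inv_def, det_fin_two_of, hdet, Ring.inverse_one, one_smul, adjugate_fin_two_of]

theorem commutator_diag_fin_two {K : Type*} [Field K] {t a b c d : K} (ht : t ≠ 0)
    (hdet : a * d - b * c = 1) :
    !![t, 0; 0, t⁻¹] * !![a, b; c, d] * (!![t, 0; 0, t⁻¹])⁻¹ * (!![a, b; c, d])⁻¹ =
      !![1 - (t ^ 2 - 1) * (b * c), (t ^ 2 - 1) * (a * b);
        ((t ^ 2)⁻¹ - 1) * (c * d), 1 - ((t ^ 2)⁻¹ - 1) * (b * c)] := by
  have hdiag : t * t⁻¹ - 0 * 0 = 1 := by simp [ht]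
  rw [inv_fin_two_of_det_eq_one hdiag, inv_fin_two_of_det_eq_one hdet]
  ext i j
  fin_cases i <;> fin_cases j <;> simp <;> field_simp
  · linear_combination hdet
  · ring
  · ring
  · linear_combination t ^ 2 * hdet

theorem sub_inv_ne_zero_of_sq_ne_one {K : Type*} [Field K] {t : K} (ht : t ≠ 0)
    (ht2 : t ^ 2 ≠ 1) : t - t⁻¹ ≠ 0 := by
  rw [sub_ne_zero]
  contrapose! ht2
  rw [sq]
  nth_rw 2 [ht2]
  exact mul_inv_cancel₀ ht

/-- For `g₁ = [[λ,0],[0,λ⁻¹]]` (`λ ≠ 0`, `λ² ≠ 1`) and `g₂ = [[α,β],[γ,δ]] ∈ SL₂(ℂ)`,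
the commutator `c = g₁ g₂ g₁⁻¹ g₂⁻¹` satisfies: `trace c = 2 ↔ β = 0 ∨ γ = 0`;
`c` is upper triangular iff `γ = 0 ∨ δ = 0`; `c` is lower triangular iff `β = 0 ∨ α = 0`. -/
theorem commutator_with_diag_triangularity (l α β γ δ : ℂ) (hl : l ≠ 0) (hl2 : l ^ 2 ≠ 1)
    (hdet : α * δ - β * γ = 1) :
    ∀ c : Matrix (Fin 2) (Fin 2) ℂ,
      c = !![l, 0; 0, l⁻¹] * !![α, β; γ, δ] * (!![l, 0; 0, l⁻¹])⁻¹ * (!![α, β; γ, δ])⁻¹ →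
      (Matrix.trace c = 2 ↔ β = 0 ∨ γ = 0) ∧
      (c 1 0 = 0 ↔ γ = 0 ∨ δ = 0) ∧
      (c 0 1 = 0 ↔ β = 0 ∨ α = 0) := by
  rintro c rfl
  rw [commutator_diag_fin_two hl hdet, trace_fin_two_of]
  have hsub : l - l⁻¹ ≠ 0 := sub_inv_ne_zero_of_sq_ne_one hl hl2
  have hsq : l ^ 2 - 1 ≠ 0 := sub_ne_zero.mpr hl2
  have hsq_inv : (l ^ 2)⁻¹ - 1 ≠ 0 := sub_ne_zero.mpr (inv_ne_one.mpr hl2)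
  refine ⟨?_, ?_, ?_⟩
  · have htrace : 1 - (l ^ 2 - 1) * (β * γ) + (1 - ((l ^ 2)⁻¹ - 1) * (β * γ)) =
        2 - (l - l⁻¹) ^ 2 * (β * γ) := by
      field_simp
      ring
    rw [htrace]
    simp [hsub]
  · simp [hsq_inv]
  · simp [hsq, or_comm]
end

section
/- Let u = [[1, 1], [0, 1]] ∈ SL_2(ℂ). Then there exists g ∈ SL_2(ℂ) such that, setting z = u·g·u⁻¹·g⁻¹, the element z·(u·z·u⁻¹)·z⁻¹·(u·z⁻¹·u⁻¹) has trace different from 2 (in particular it is not unipotent). For example, g = [[i√2/2, −i√2/2], [−i√2, 0]] has this property. -/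
/-!
For `g = !![a, b; c, d]` of determinant one, the commutator `⁅u, g⁆` only depends on `a` and `c`.
The chosen `g` has `a * c = 1` and `c ^ 2 = -2`, which makes `z = ⁅u, g⁆ = !![0, 1/2; -2, 0]`,
an element of order four. Since `z⁻¹ = -z`, the word collapses to the square of
`z * (u * z * u⁻¹) = !![-1, 1; 4, -5]`, whose trace is `(-6) ^ 2 - 2 = 34` by Cayley–Hamilton.
-/

open Matrix

namespace Matrix

variable {R : Type*} [CommRing R]

theorem inv_fin_two_of_det_eq_one_s11 {a b c d : R} (h : a * d - b * c = 1) :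
    !![a, b; c, d]⁻¹ = !![d, -b; -c, a] := by
  rw [inv_def, det_fin_two_of, h, adjugate_fin_two_of, Ring.inverse_one, one_smul]

theorem trace_sq_fin_two (M : Matrix (Fin 2) (Fin 2) R) :
    trace (M ^ 2) = trace M ^ 2 - 2 * det M := by
  simp only [sq, trace_fin_two, det_fin_two, mul_apply, Fin.sum_univ_two]
  ring

theorem unipotent_commutator_fin_two {a b c d : R} (h : a * d - b * c = 1) :
    !![1, 1; 0, 1] * !![a, b; c, d] * !![1, 1; 0, 1]⁻¹ * !![a, b; c, d]⁻¹ =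
      !![1 + a * c + c ^ 2, 1 - a ^ 2 - a * c; c ^ 2, 1 - a * c] := by
  rw [inv_fin_two_of_det_eq_one_s11 (by ring), inv_fin_two_of_det_eq_one_s11 h]
  ext i j
  fin_cases i <;> fin_cases j <;> simp
  · linear_combination h
  · linear_combination h
  · ring
  · linear_combination h

theorem mul_conj_mul_inv_mul_conj_inv_eq_sq {n : Type*} [Fintype n] [DecidableEq n]
    {z u : Matrix n n R} (hz : z * z = -1) :
    z * (u * z * u⁻¹) * z⁻¹ * (u * z⁻¹ * u⁻¹) = (z * (u * z * u⁻¹)) ^ 2 := by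
  have hz_inv : z⁻¹ = -z := inv_eq_left_inv (by rw [neg_mul, hz, neg_neg])
  simp only [hz_inv, mul_neg, neg_mul, neg_neg, sq, mul_assoc]

end Matrix

/-- For `u = [[1,1],[0,1]]` there exists `g ∈ SL₂(ℂ)` such that the value of the word
`w(x,y) = ⁅⁅x,y⁆, x⁅x,y⁆x⁻¹⁆` at `(u,g)` has trace different from `2` (so is not
unipotent); for example `g = [[i√2/2, -i√2/2],[-i√2, 0]]` has this property. -/
theorem word_value_at_unipotent_not_unipotent :
    ∀ u g : Matrix (Fin 2) (Fin 2) ℂ,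
      u = !![1, 1; 0, 1] →
      g = !![Complex.I * (Real.sqrt 2 : ℂ) / 2, -(Complex.I * (Real.sqrt 2 : ℂ) / 2);
             -(Complex.I * (Real.sqrt 2 : ℂ)), 0] →
      g.det = 1 ∧
      ∀ z : Matrix (Fin 2) (Fin 2) ℂ, z = u * g * u⁻¹ * g⁻¹ →
        Matrix.trace (z * (u * z * u⁻¹) * z⁻¹ * (u * z⁻¹ * u⁻¹)) ≠ 2 := by
  intro u g hu hg
  have hIs : (Complex.I * Real.sqrt 2) ^ 2 = -2 := by
    rw [mul_pow, Complex.I_sq, ← Complex.ofReal_pow, Real.sq_sqrt zero_le_two]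
    norm_num
  have hac : Complex.I * Real.sqrt 2 / 2 * -(Complex.I * Real.sqrt 2) = 1 := by
    linear_combination (-1 / 2 : ℂ) * hIs
  have hdet : Complex.I * Real.sqrt 2 / 2 * 0 - -(Complex.I * Real.sqrt 2 / 2) *
      -(Complex.I * Real.sqrt 2) = 1 := by
    linear_combination hac
  refine ⟨by rw [hg, det_fin_two_of, hdet], fun z hz => ?_⟩
  have hz_val : z = !![0, 1 / 2; -2, 0] := by
    rw [hz, hu, hg, unipotent_commutator_fin_two hdet, hac, neg_sq, hIs, div_pow, hIs]
    norm_num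
  have hz_sq : z * z = -1 := by
    ext i j
    fin_cases i <;> fin_cases j <;> norm_num [hz_val]
  have hzu : z * (u * z * u⁻¹) = !![-1, 1; 4, -5] := by
    rw [hz_val, hu, inv_fin_two_of_det_eq_one_s11 (by ring)]
    ext i j
    fin_cases i <;> fin_cases j <;> norm_num
  rw [mul_conj_mul_inv_mul_conj_inv_eq_sq hz_sq, trace_sq_fin_two, hzu, trace_fin_two_of,
    det_fin_two_of]
  norm_num
end

section
/- Let g, h ∈ SL_2(ℂ), where g is diagonalizable and satisfies g² ≠ I and g² ≠ −I (equivalently, g is a semisimple element whose order in SL_2(ℂ) is not 1, 2, or 4). Set s = g·h·g⁻¹·h⁻¹ and suppose that s is a diagonal matrix with s ≠ I and s ≠ −I. If g·s·g⁻¹ is upper triangular, then g is upper triangular. -/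
/-!
Write `s = diag(a, a⁻¹)` with `a ≠ ±1`. The `(2,1)` entry of `g s g⁻¹` is `g₂₁ g₂₂ (a - a⁻¹)`,
so if `g` is not upper triangular then `g₂₂ = 0`. Since `g⁻¹ s = h g⁻¹ h⁻¹` is conjugate to `g⁻¹`,
`tr (g⁻¹ s) = tr g⁻¹ = tr g`, which for `g₂₂ = 0` reads `g₁₁ a⁻¹ = g₁₁`. Hence `g₁₁ = 0`, so
`tr g = 0` and Cayley–Hamilton gives `g² = -I`.
-/

open Matrix

namespace Matrix

variable {R : Type*} [CommRing R]

lemma mul_diagonal_mul_adjugate_apply_one_zero (A : Matrix (Fin 2) (Fin 2) R) (d : Fin 2 → R) :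
    (A * diagonal d * adjugate A) 1 0 = A 1 0 * A 1 1 * (d 0 - d 1) := by
  simp only [adjugate_fin_two, mul_apply, Fin.sum_univ_two, of_apply, cons_val', cons_val_zero,
    cons_val_one, cons_val_fin_one, diagonal_apply_eq, diagonal_apply_ne, ne_eq, zero_ne_one,
    one_ne_zero, not_false_eq_true, mul_zero, add_zero, zero_add, mul_neg]
  ring

lemma trace_adjugate_mul_diagonal (A : Matrix (Fin 2) (Fin 2) R) (d : Fin 2 → R) :
    trace (adjugate A * diagonal d) = A 1 1 * d 0 + A 0 0 * d 1 := by
  simp [adjugate_fin_two, trace_fin_two, vecMul_diagonal]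

lemma trace_adjugate_fin_two (A : Matrix (Fin 2) (Fin 2) R) : trace (adjugate A) = trace A := by
  simp [adjugate_fin_two, trace_fin_two, add_comm]

lemma sq_eq_neg_one_of_trace_eq_zero {A : Matrix (Fin 2) (Fin 2) R} (hdet : A.det = 1)
    (htr : A.trace = 0) : A ^ 2 = -1 := by
  rw [det_fin_two] at hdet
  rw [trace_fin_two] at htr
  ext i j
  fin_cases i <;> fin_cases j <;>
    simp only [Fin.zero_eta, Fin.mk_one, sq, mul_apply, Fin.sum_univ_two, neg_apply, one_apply_eq,
      one_apply_ne zero_ne_one, one_apply_ne one_ne_zero, neg_zero]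
  · linear_combination A 0 0 * htr - hdet
  · linear_combination A 0 1 * htr
  · linear_combination A 1 0 * htr
  · linear_combination A 1 1 * htr - hdet

lemma apply_one_ne_one_of_det_diagonal_eq_one {d : Fin 2 → R} (hdet : (diagonal d).det = 1)
    (hne : diagonal d ≠ 1) : d 1 ≠ 1 := by
  rw [det_diagonal, Fin.prod_univ_two] at hdet
  intro hd1
  apply hne
  rw [← diagonal_one]
  congr 1
  ext i
  fin_cases i <;> simp_all

lemma apply_zero_ne_apply_one_of_det_diagonal_eq_one [NoZeroDivisors R] {d : Fin 2 → R}
    (hdet : (diagonal d).det = 1) (hne_one : diagonal d ≠ 1) (hne_neg_one : diagonal d ≠ -1) :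
    d 0 ≠ d 1 := by
  rw [det_diagonal, Fin.prod_univ_two] at hdet
  intro hd
  rw [← hd] at hdet
  rcases mul_self_eq_one_iff.mp hdet with hd0 | hd0
  · apply hne_one
    ext i j
    fin_cases i <;> fin_cases j <;> simp [hd0, ← hd]
  · apply hne_neg_one
    ext i j
    fin_cases i <;> fin_cases j <;> simp [hd0, ← hd]

namespace SpecialLinearGroup

lemma trace_conj {n : Type*} [Fintype n] [DecidableEq n] (h x : SpecialLinearGroup n R) :
    trace (↑(h * x * h⁻¹) : Matrix n n R) = trace (↑x : Matrix n n R) := by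
  rw [coe_mul, coe_mul, coe_inv, trace_mul_cycle, adjugate_mul, det_coe, one_smul, one_mul]

end SpecialLinearGroup

end Matrix

open Matrix.SpecialLinearGroup

theorem borel_containment_of_commutator_general (g h : Matrix.SpecialLinearGroup (Fin 2) ℂ)
    (hg2 : (↑(g ^ 2) : Matrix (Fin 2) (Fin 2) ℂ) ≠ -1) :
    ∀ s : Matrix.SpecialLinearGroup (Fin 2) ℂ,
      s = g * h * g⁻¹ * h⁻¹ →
      Matrix.IsDiag (↑s : Matrix (Fin 2) (Fin 2) ℂ) →
      (↑s : Matrix (Fin 2) (Fin 2) ℂ) ≠ 1 →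
      (↑s : Matrix (Fin 2) (Fin 2) ℂ) ≠ -1 →
      (↑(g * s * g⁻¹) : Matrix (Fin 2) (Fin 2) ℂ) 1 0 = 0 →
      (↑g : Matrix (Fin 2) (Fin 2) ℂ) 1 0 = 0 := by
  intro s hs hs_diag hs_ne_one hs_ne_neg_one hconj
  obtain ⟨d, hd⟩ : ∃ d, (↑s : Matrix (Fin 2) (Fin 2) ℂ) = diagonal d :=
    ⟨_, ((isDiag_iff_diagonal_diag _).mp hs_diag).symm⟩
  have hdet : (diagonal d).det = 1 := hd ▸ s.det_coe
  rw [hd] at hs_ne_one hs_ne_neg_one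
  have hd_ne : d 0 ≠ d 1 :=
    apply_zero_ne_apply_one_of_det_diagonal_eq_one hdet hs_ne_one hs_ne_neg_one
  have hd₁ : d 1 ≠ 1 := apply_one_ne_one_of_det_diagonal_eq_one hdet hs_ne_one
  rw [coe_mul, coe_mul, coe_inv, hd, mul_diagonal_mul_adjugate_apply_one_zero] at hconj
  by_contra hg₁₀
  have hg₁₁ : (↑g : Matrix (Fin 2) (Fin 2) ℂ) 1 1 = 0 :=
    (mul_eq_zero.mp ((mul_eq_zero.mp hconj).resolve_right (sub_ne_zero.mpr hd_ne))).resolve_left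
      hg₁₀
  have htrace : trace (↑(g⁻¹ * s) : Matrix (Fin 2) (Fin 2) ℂ) =
      trace (↑(g⁻¹) : Matrix (Fin 2) (Fin 2) ℂ) := by
    rw [show g⁻¹ * s = h * g⁻¹ * h⁻¹ by rw [hs]; group, SpecialLinearGroup.trace_conj]
  rw [coe_mul, coe_inv, hd, trace_adjugate_mul_diagonal, trace_adjugate_fin_two,
    trace_fin_two, hg₁₁, zero_mul, zero_add, add_zero] at htrace
  have hg₀₀ : (↑g : Matrix (Fin 2) (Fin 2) ℂ) 0 0 = 0 :=
    (mul_eq_zero.mp (by linear_combination htrace : _ * (d 1 - 1) = 0)).resolve_right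
      (sub_ne_zero.mpr hd₁)
  have htrace_g : trace (↑g : Matrix (Fin 2) (Fin 2) ℂ) = 0 := by
    rw [trace_fin_two, hg₀₀, hg₁₁, add_zero]
  exact hg2 (coe_pow g 2 ▸ sq_eq_neg_one_of_trace_eq_zero g.det_coe htrace_g)

/-- Let `g, h ∈ SL₂(ℂ)` with `g` diagonalizable and `g² ≠ ±1`, and suppose the commutator
`s = ⁅g,h⁆` is diagonal with `s ≠ ±1`. If `g s g⁻¹` is upper triangular, then `g` is upper
triangular. -/
theorem borel_containment_of_commutator (g h : Matrix.SpecialLinearGroup (Fin 2) ℂ)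
    (hdiag : ∃ P : GL (Fin 2) ℂ,
      Matrix.IsDiag ((↑(P⁻¹) : Matrix (Fin 2) (Fin 2) ℂ) * (↑g : Matrix (Fin 2) (Fin 2) ℂ) *
        (↑P : Matrix (Fin 2) (Fin 2) ℂ)))
    (hg1 : (↑(g ^ 2) : Matrix (Fin 2) (Fin 2) ℂ) ≠ 1)
    (hg2 : (↑(g ^ 2) : Matrix (Fin 2) (Fin 2) ℂ) ≠ -1) :
    ∀ s : Matrix.SpecialLinearGroup (Fin 2) ℂ,
      s = g * h * g⁻¹ * h⁻¹ →
      Matrix.IsDiag (↑s : Matrix (Fin 2) (Fin 2) ℂ) →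
      (↑s : Matrix (Fin 2) (Fin 2) ℂ) ≠ 1 →
      (↑s : Matrix (Fin 2) (Fin 2) ℂ) ≠ -1 →
      (↑(g * s * g⁻¹) : Matrix (Fin 2) (Fin 2) ℂ) 1 0 = 0 →
      (↑g : Matrix (Fin 2) (Fin 2) ℂ) 1 0 = 0 :=
  borel_containment_of_commutator_general g h hg2
end

section
/- Let g_1 ∈ SL_2(ℂ) satisfy g_1² = −I. Then for every g_2 ∈ SL_2(ℂ), writing z = g_1·g_2·g_1⁻¹·g_2⁻¹, one has g_1·z·g_1⁻¹ = z⁻¹, and consequently z·(g_1·z·g_1⁻¹)·z⁻¹·(g_1·z⁻¹·g_1⁻¹) = I; that is, the word w(x,y) = ⁅⁅x,y⁆, x⁅x,y⁆x⁻¹⁆ evaluates to the identity at every pair (g_1, g_2) with g_1² = −I. -/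
/-! Since `g₁² = -1` is central, conjugation by `g₁` inverts the commutator `z = ⁅g₁, g₂⁆`;
hence `g₁ z g₁⁻¹ = z⁻¹` commutes with `z`, and the outer commutator is trivial. -/

open scoped commutatorElement

section Group

variable {G : Type*} [Group G]

theorem conj_commutatorElement_eq_inv_of_commute_sq {x y : G} (h : Commute (x ^ 2) y) :
    x * ⁅x, y⁆ * x⁻¹ = ⁅x, y⁆⁻¹ := by
  calc x * ⁅x, y⁆ * x⁻¹ = x ^ 2 * y * x⁻¹ * y⁻¹ * x⁻¹ := by
        simp only [commutatorElement_def, sq, mul_assoc]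
    _ = y * x ^ 2 * x⁻¹ * y⁻¹ * x⁻¹ := by rw [h.eq]
    _ = ⁅x, y⁆⁻¹ := by rw [commutatorElement_def]; group

theorem commutatorElement_conj_eq_one_of_conj_eq_inv {x z : G} (h : x * z * x⁻¹ = z⁻¹) :
    ⁅z, x * z * x⁻¹⁆ = 1 := by
  rw [h, commutatorElement_eq_one_iff_commute]
  exact (Commute.refl z).inv_right

end Group

theorem Matrix.SpecialLinearGroup.commute_of_coe_eq_neg_one {n R : Type*} [Fintype n]
    [DecidableEq n] [CommRing R] {g : Matrix.SpecialLinearGroup n R}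
    (hg : (g : Matrix n n R) = -1) (h : Matrix.SpecialLinearGroup n R) : Commute g h :=
  Subtype.ext <| by
    rw [Matrix.SpecialLinearGroup.coe_mul, Matrix.SpecialLinearGroup.coe_mul, hg,
      neg_one_mul, mul_neg_one]

/-- If `g₁ ∈ SL₂(ℂ)` satisfies `g₁² = -1`, then for every `g₂`, with `z = ⁅g₁,g₂⁆` one has
`g₁ z g₁⁻¹ = z⁻¹`, and the word `w(x,y) = ⁅⁅x,y⁆, x⁅x,y⁆x⁻¹⁆` evaluates to the identity
at `(g₁, g₂)`. -/
theorem word_trivial_on_order_four_class (g₁ : Matrix.SpecialLinearGroup (Fin 2) ℂ)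
    (hg : (↑(g₁ ^ 2) : Matrix (Fin 2) (Fin 2) ℂ) = -1)
    (g₂ : Matrix.SpecialLinearGroup (Fin 2) ℂ) :
    ∀ z : Matrix.SpecialLinearGroup (Fin 2) ℂ,
      z = g₁ * g₂ * g₁⁻¹ * g₂⁻¹ →
      g₁ * z * g₁⁻¹ = z⁻¹ ∧ z * (g₁ * z * g₁⁻¹) * z⁻¹ * (g₁ * z⁻¹ * g₁⁻¹) = 1 := by
  intro z hz
  rw [← commutatorElement_def] at hz
  subst hz
  have hconj : g₁ * ⁅g₁, g₂⁆ * g₁⁻¹ = ⁅g₁, g₂⁆⁻¹ :=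
    conj_commutatorElement_eq_inv_of_commute_sq
      (Matrix.SpecialLinearGroup.commute_of_coe_eq_neg_one hg g₂)
  refine ⟨hconj, ?_⟩
  have hword := commutatorElement_conj_eq_one_of_conj_eq_inv hconj
  simpa only [commutatorElement_def, mul_inv_rev, inv_inv, mul_assoc] using hword
end

section
/- For every g ∈ SL_2(ℂ) there exist x, y ∈ SL_2(ℂ) such that x·y·x⁻¹·y⁻¹ = g or x·y·x⁻¹·y⁻¹ = −g. Equivalently, the word map on PSL_2(ℂ) = SL_2(ℂ)/{±I} induced by the commutator word w = ⁅x,y⁆ is surjective. -/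
/-!
A non-scalar `2 × 2` matrix `A` has a cyclic vector `v`, and in the basis `v, A v` it becomes the
companion matrix of its characteristic polynomial. In `SL₂(K)` over an algebraically closed field
the change of basis can be rescaled to determinant one, so two non-central elements are conjugate
as soon as their traces agree. For `x = diag(2, 2⁻¹)` and `y = !![1, 1; c, 1 + c]` the commutator
`⁅x, y⁆` is non-central with trace `2 - 9c/4`, which takes every value; hence every non-central
element of `SL₂(ℂ)` is a commutator, while the central elements `±1` are `±⁅1, 1⁆`.
-/

open Matrix Subgroup
open scoped MatrixGroups commutatorElement

theorem IsConj.mem_commutatorSet {G : Type*} [Group G] {a b : G} (hab : IsConj a b)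
    (ha : a ∈ commutatorSet G) : b ∈ commutatorSet G := by
  obtain ⟨c, rfl⟩ := isConj_iff.mp hab
  obtain ⟨x, y, rfl⟩ := ha
  exact ⟨MulAut.conj c x, MulAut.conj c y, (map_commutatorElement _ _ _).symm⟩

namespace Matrix

variable {K : Type*} [Field K]

theorem exists_cyclic_vector_of_ne_scalar {A : Matrix (Fin 2) (Fin 2) K}
    (hA : ∀ c, A ≠ scalar (Fin 2) c) : ∃ v : Fin 2 → K, (of ![v, A *ᵥ v]).det ≠ 0 := by
  by_contra! h
  have h₁₀ : A 1 0 = 0 := by simpa [det_fin_two] using h ![1, 0]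
  have h₀₁ : A 0 1 = 0 := by simpa [det_fin_two] using h ![0, 1]
  have h₁₁ : A 1 1 = A 0 0 := by simpa [det_fin_two, h₁₀, h₀₁, sub_eq_zero] using h ![1, 1]
  refine hA (A 0 0) ?_
  ext i j
  fin_cases i <;> fin_cases j <;> simp [h₁₀, h₀₁, h₁₁]

theorem exists_mul_eq_mul_companion_of_ne_scalar {A : Matrix (Fin 2) (Fin 2) K}
    (hA : ∀ c, A ≠ scalar (Fin 2) c) :
    ∃ P : Matrix (Fin 2) (Fin 2) K, P.det ≠ 0 ∧ A * P = P * !![0, -A.det; 1, A.trace] := by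
  obtain ⟨v, hv⟩ := exists_cyclic_vector_of_ne_scalar hA
  refine ⟨(of ![v, A *ᵥ v])ᵀ, by rwa [det_transpose], ?_⟩
  -- the second column is Cayley–Hamilton: `A² v = tr A • A v - det A • v`
  ext i j
  fin_cases i <;> fin_cases j <;>
    simp [det_fin_two, trace_fin_two, Fin.sum_univ_two, mul_apply] <;> ring

end Matrix

namespace Matrix.SpecialLinearGroup

variable {K : Type*} [Field K]

def companion (t : K) : SL(2, K) := ⟨!![0, -1; 1, t], by simp [det_fin_two_of]⟩

theorem coe_ne_scalar_of_notMem_center {g : SL(2, K)} (hg : g ∉ center SL(2, K)) (c : K) :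
    (g : Matrix (Fin 2) (Fin 2) K) ≠ scalar (Fin 2) c := by
  intro hc
  refine hg (mem_center_iff.mpr ⟨c, ?_, hc.symm⟩)
  simpa [hc] using g.det_coe

theorem isConj_companion_trace [IsAlgClosed K] {g : SL(2, K)} (hg : g ∉ center SL(2, K)) :
    IsConj (companion (trace (g : Matrix (Fin 2) (Fin 2) K))) g := by
  obtain ⟨P, hP, hgP⟩ :=
    exists_mul_eq_mul_companion_of_ne_scalar (coe_ne_scalar_of_notMem_center hg)
  obtain ⟨s, hs⟩ := IsAlgClosed.exists_pow_nat_eq P.det two_pos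
  have hs₀ : s ≠ 0 := by rintro rfl; exact hP (by simp [← hs])
  let u : SL(2, K) := ⟨s⁻¹ • P, by simp [← hs, hs₀]⟩
  refine isConj_iff.mpr ⟨u, mul_inv_eq_iff_eq_mul.mpr (Subtype.ext ?_)⟩
  rw [coe_mul, coe_mul]
  simp only [u, companion, Matrix.smul_mul, Matrix.mul_smul, hgP, g.det_coe]

theorem exists_commutatorElement_notMem_center_trace_eq [CharZero K] (t : K) :
    ∃ x y : SL(2, K), ⁅x, y⁆ ∉ center SL(2, K) ∧
      trace ((⁅x, y⁆ : SL(2, K)) : Matrix (Fin 2) (Fin 2) K) = t := by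
  let x : SL(2, K) := ⟨!![2, 0; 0, 2⁻¹], by simp [det_fin_two_of]⟩
  let c : K := 4 * (2 - t) / 9
  let y : SL(2, K) := ⟨!![1, 1; c, 1 + c], by simp [det_fin_two_of]⟩
  have hxy : ((⁅x, y⁆ : SL(2, K)) : Matrix (Fin 2) (Fin 2) K) =
      !![1 - 3 * c, 3; -3 * c * (1 + c) / 4, 1 + 3 * c / 4] := by
    rw [commutatorElement_def, coe_mul, coe_mul, coe_mul, coe_inv, coe_inv]
    ext i j
    fin_cases i <;> fin_cases j <;>
      simp [x, y, adjugate_fin_two_of, mul_apply, Fin.sum_univ_two] <;> ring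
  refine ⟨x, y, fun hcen ↦ ?_, ?_⟩
  · obtain ⟨r, -, hr⟩ := mem_center_iff.mp hcen
    have h₀₁ := congrFun (congrFun hr 0) 1
    simp [hxy] at h₀₁
  · rw [hxy, trace_fin_two_of]
    simp only [c]
    ring

theorem mem_commutatorSet_of_notMem_center [IsAlgClosed K] [CharZero K] {g : SL(2, K)}
    (hg : g ∉ center SL(2, K)) : g ∈ commutatorSet SL(2, K) := by
  obtain ⟨x, y, hxy, htr⟩ :=
    exists_commutatorElement_notMem_center_trace_eq (trace (g : Matrix (Fin 2) (Fin 2) K))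
  have hconj : IsConj ⁅x, y⁆ g := by
    have h := isConj_companion_trace hxy
    rw [htr] at h
    exact h.symm.trans (isConj_companion_trace hg)
  exact hconj.mem_commutatorSet (commutator_mem_commutatorSet x y)

end Matrix.SpecialLinearGroup

/-- Surjectivity of the commutator word map on `PSL₂(ℂ)`: for every `g ∈ SL₂(ℂ)` there are
`x, y ∈ SL₂(ℂ)` with `⁅x,y⁆ = g` or `⁅x,y⁆ = -g`. -/
theorem commutator_word_map_surjective_PSL2C (g : Matrix.SpecialLinearGroup (Fin 2) ℂ) :
    ∃ x y : Matrix.SpecialLinearGroup (Fin 2) ℂ,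
      (↑(x * y * x⁻¹ * y⁻¹) : Matrix (Fin 2) (Fin 2) ℂ) = (↑g : Matrix (Fin 2) (Fin 2) ℂ) ∨
      (↑(x * y * x⁻¹ * y⁻¹) : Matrix (Fin 2) (Fin 2) ℂ) = -(↑g : Matrix (Fin 2) (Fin 2) ℂ) := by
  by_cases hg : g ∈ center SL(2, ℂ)
  · obtain ⟨r, hr, hrg⟩ := Matrix.SpecialLinearGroup.mem_center_iff.mp hg
    have hr' : r = 1 ∨ r = -1 := by simpa using hr
    refine ⟨1, 1, ?_⟩
    rcases hr' with rfl | rfl <;> simp [← hrg]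
  · obtain ⟨x, y, hxy⟩ := Matrix.SpecialLinearGroup.mem_commutatorSet_of_notMem_center hg
    exact ⟨x, y, .inl (by rw [← commutatorElement_def, hxy])⟩
end

section
/- Let p be a prime number. For every g ∈ SL_2(ℂ) there exist x, y ∈ SL_2(ℂ) such that (x·y·x⁻¹·y⁻¹)^p = g or (x·y·x⁻¹·y⁻¹)^p = −g. Equivalently, the word map on PSL_2(ℂ) = SL_2(ℂ)/{±I} induced by the word w = ⁅x,y⁆^p is surjective. -/
/-!
Over an algebraically closed field `K`, every element of `SL₂(K)` is conjugate to an upper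
triangular matrix with diagonal `t, t⁻¹`, and the set of elements `g` with `±g = ⁅x, y⁆ⁿ` is closed
under conjugation. If `t ≠ t⁻¹`, a unipotent conjugation makes the matrix diagonal, and for
`s ^ (2n) = t` the commutator of `diag(s, s⁻¹)` with the Weyl element is `diag(s², s⁻²)`, whose
`n`-th power is `diag(t, t⁻¹)`. Otherwise `t = ±1` and the matrix is `±[[1, b], [0, 1]]`, the `n`-th
power of `⁅diag(s, s⁻¹), [[1, c], [0, 1]]⁆ = [[1, (s² - 1) c], [0, 1]]` for `s ≠ 0, ±1` and
`c = b / ((s² - 1) n)`.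
-/

open Matrix Matrix.SpecialLinearGroup
open scoped MatrixGroups commutatorElement

section Commutator

variable {G : Type*} [Group G]

theorem commutatorElement_pow_conj (c x y : G) (n : ℕ) :
    ⁅c * x * c⁻¹, c * y * c⁻¹⁆ ^ n = c * ⁅x, y⁆ ^ n * c⁻¹ := by
  rw [← conj_pow]
  simp only [commutatorElement_def]
  group

variable [HasDistribNeg G]

def IsCommutatorPowUpToSign (n : ℕ) (g : G) : Prop :=
  ∃ x y : G, ⁅x, y⁆ ^ n = g ∨ ⁅x, y⁆ ^ n = -g

theorem IsCommutatorPowUpToSign.of_conj {n : ℕ} {g : G} (c : G)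
    (h : IsCommutatorPowUpToSign n (c * g * c⁻¹)) : IsCommutatorPowUpToSign n g := by
  obtain ⟨x, y, h⟩ := h
  refine ⟨c⁻¹ * x * c⁻¹⁻¹, c⁻¹ * y * c⁻¹⁻¹, ?_⟩
  rw [commutatorElement_pow_conj]
  rcases h with h | h <;> rw [h]
  · left; group
  · right; simp only [mul_neg, neg_mul]; group

end Commutator

namespace Matrix.SpecialLinearGroup

variable {K : Type*} [Field K]

def upper (t : Kˣ) (b : K) : SL(2, K) :=
  ⟨!![(t : K), b; 0, ↑t⁻¹], by simp⟩

@[simp]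
theorem coe_upper (t : Kˣ) (b : K) :
    (upper t b : Matrix (Fin 2) (Fin 2) K) = !![(t : K), b; 0, ↑t⁻¹] :=
  rfl

theorem upper_mul_upper (s t : Kˣ) (a b : K) :
    upper s a * upper t b = upper (s * t) (s * b + a * ↑t⁻¹) := by
  ext i j
  fin_cases i <;> fin_cases j <;> simp [mul_comm]

theorem upper_one_zero : upper (1 : Kˣ) 0 = 1 := by
  ext i j
  fin_cases i <;> fin_cases j <;> simp

theorem upper_inv (t : Kˣ) (b : K) : (upper t b)⁻¹ = upper t⁻¹ (-b) := by
  refine (eq_inv_of_mul_eq_one_left ?_).symm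
  rw [upper_mul_upper, inv_mul_cancel, ← upper_one_zero]
  congr 1
  simp [mul_comm]

theorem neg_upper (t : Kˣ) (b : K) : -upper t b = upper (-t) (-b) := by
  ext i j
  fin_cases i <;> fin_cases j <;> simp

theorem upper_zero_pow (t : Kˣ) (n : ℕ) : upper t 0 ^ n = upper (t ^ n) 0 := by
  induction n with
  | zero => rw [pow_zero, pow_zero, upper_one_zero]
  | succ n ih => rw [pow_succ, ih, upper_mul_upper, pow_succ]; simp

theorem upper_one_pow (b : K) (n : ℕ) : upper 1 b ^ n = upper 1 (n * b) := by
  induction n with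
  | zero => rw [pow_zero, Nat.cast_zero, zero_mul, upper_one_zero]
  | succ n ih =>
    rw [pow_succ, ih, upper_mul_upper]
    congr 1 <;> simp only [Units.val_one, one_mul, inv_one, mul_one, Nat.cast_succ]
    ring

def weyl : SL(2, K) :=
  ⟨!![0, 1; -1, 0], by simp⟩

@[simp]
theorem coe_weyl : ((weyl : SL(2, K)) : Matrix (Fin 2) (Fin 2) K) = !![0, 1; -1, 0] :=
  rfl

theorem weyl_mul_upper_mul_inv (t : Kˣ) : weyl * upper t 0 * weyl⁻¹ = upper t⁻¹ 0 := by
  ext i j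
  fin_cases i <;> fin_cases j <;> simp [adjugate_fin_two_of]

theorem commutatorElement_upper_weyl (t : Kˣ) : ⁅upper t 0, weyl⁆ = upper (t ^ 2) 0 := by
  rw [commutatorElement_def, mul_assoc, mul_assoc, ← mul_assoc weyl, upper_inv, neg_zero,
    weyl_mul_upper_mul_inv, inv_inv, upper_mul_upper, sq]
  simp

theorem commutatorElement_upper_upper_one (t : Kˣ) (b : K) :
    ⁅upper t 0, upper 1 b⁆ = upper 1 (((t : K) ^ 2 - 1) * b) := by
  simp only [commutatorElement_def, upper_inv, upper_mul_upper]
  congr 1 <;> simp only [mul_one, mul_inv_cancel, inv_one, Units.val_one, mul_neg, one_mul,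
    neg_zero, mul_zero, add_zero, inv_inv, zero_add]
  ring

theorem upper_one_mul_upper_mul_inv (k : K) (t : Kˣ) (b : K) :
    upper 1 k * upper t b * (upper 1 k)⁻¹ = upper t (b + k * (↑t⁻¹ - t)) := by
  simp only [upper_inv, upper_mul_upper]
  congr 1 <;> simp only [one_mul, inv_one, mul_one, mul_neg, Units.val_one]
  ring

theorem exists_eq_upper_of_apply_one_zero {g : SL(2, K)} (hg : g 1 0 = 0) :
    ∃ t b, g = upper t b := by
  obtain ⟨a, b, ha, rfl⟩ := fin_two_exists_eq_mk_of_apply_zero_one_eq_zero g hg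
  exact ⟨Units.mk0 a ha, b, rfl⟩

theorem exists_conj_eq_upper [IsAlgClosed K] (g : SL(2, K)) :
    ∃ c t b, c * g * c⁻¹ = upper t b := by
  by_cases hg : g 1 0 = 0
  · exact ⟨1, by simpa using exists_eq_upper_of_apply_one_zero hg⟩
  obtain ⟨μ, hμ⟩ : ∃ μ : K, μ ^ 2 - (g 0 0 + g 1 1) * μ + 1 = 0 := by
    open Polynomial in
    have hdeg : (X ^ 2 - C (g 0 0 + g 1 1) * X + 1 : K[X]).degree = 2 := by compute_degree!
    obtain ⟨μ, hμ⟩ := IsAlgClosed.exists_root _ (hdeg ▸ two_ne_zero)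
    exact ⟨μ, by simpa using hμ⟩
  have hdet : g 0 0 * g 1 1 - g 0 1 * g 1 0 = 1 := by rw [← det_fin_two, det_coe]
  -- the first column of `m` is the `μ`-eigenvector `(μ - g 1 1, g 1 0)` of `g`
  let m : SL(2, K) := ⟨!![μ - g 1 1, -(g 1 0)⁻¹; g 1 0, 0], by simp [hg]⟩
  refine ⟨m⁻¹, exists_eq_upper_of_apply_one_zero ?_⟩
  have hm : (m : Matrix (Fin 2) (Fin 2) K) = !![μ - g 1 1, -(g 1 0)⁻¹; g 1 0, 0] := rfl
  simp only [inv_inv, coe_mul, coe_inv, hm, adjugate_fin_two_of, mul_apply, Fin.sum_univ_two,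
    of_apply, cons_val', cons_val_zero, cons_val_one, cons_val_fin_one, empty_val', neg_neg]
  linear_combination g 1 0 * hμ + g 1 0 * hdet

variable [IsAlgClosed K] {n : ℕ}

theorem exists_commutatorElement_pow_eq_upper_zero (hn : n ≠ 0) (t : Kˣ) :
    ∃ x y : SL(2, K), ⁅x, y⁆ ^ n = upper t 0 := by
  obtain ⟨s, hs⟩ := IsAlgClosed.exists_pow_nat_eq (t : K) (n := 2 * n) (by positivity)
  have hs₀ : s ≠ 0 := by
    rintro rfl
    exact t.ne_zero (by rw [← hs, zero_pow (by positivity)])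
  refine ⟨upper (Units.mk0 s hs₀) 0, weyl, ?_⟩
  rw [commutatorElement_upper_weyl, upper_zero_pow, ← pow_mul]
  congr
  ext
  simpa using hs

theorem exists_commutatorElement_pow_eq_upper_one (hn : (n : K) ≠ 0) (b : K) :
    ∃ x y : SL(2, K), ⁅x, y⁆ ^ n = upper 1 b := by
  classical
  obtain ⟨s, hs⟩ := Infinite.exists_notMem_finset ({0, 1, -1} : Finset K)
  simp only [Finset.mem_insert, Finset.mem_singleton, not_or] at hs
  obtain ⟨hs₀, hs₁, hs₂⟩ := hs
  have hs' : s ^ 2 - 1 ≠ 0 := fun h ↦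
    (mul_self_eq_one_iff.mp (by linear_combination h)).elim hs₁ hs₂
  refine ⟨upper (Units.mk0 s hs₀) 0, upper 1 (b / ((s ^ 2 - 1) * n)), ?_⟩
  rw [commutatorElement_upper_upper_one, upper_one_pow, Units.val_mk0]
  congr 1
  field_simp

theorem isCommutatorPowUpToSign_upper (hn : (n : K) ≠ 0) (t : Kˣ) (b : K) :
    IsCommutatorPowUpToSign n (upper t b) := by
  by_cases ht : t = t⁻¹
  · have ht' : (t : K) * t = 1 := by
      rw [← Units.val_mul, mul_eq_one_iff_eq_inv.mpr ht, Units.val_one]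
    rcases mul_self_eq_one_iff.mp ht' with ht₁ | ht₁
    · obtain ⟨x, y, h⟩ := exists_commutatorElement_pow_eq_upper_one hn b
      exact ⟨x, y, .inl (by rw [h, Units.val_eq_one.mp ht₁])⟩
    · obtain rfl : t = -1 := Units.ext (by rw [ht₁, Units.val_neg, Units.val_one])
      obtain ⟨x, y, h⟩ := exists_commutatorElement_pow_eq_upper_one hn (-b)
      exact ⟨x, y, .inr (by rw [h, neg_upper, neg_neg])⟩
  · have hne : (t : K) - ↑t⁻¹ ≠ 0 := sub_ne_zero.mpr (Units.val_injective.ne ht)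
    refine .of_conj (upper 1 (b / (t - ↑t⁻¹))) ?_
    rw [upper_one_mul_upper_mul_inv,
      show b + b / (t - ↑t⁻¹) * (↑t⁻¹ - t) = 0 by field_simp; ring]
    have hn₀ : n ≠ 0 := by rintro rfl; exact hn Nat.cast_zero
    obtain ⟨x, y, h⟩ := exists_commutatorElement_pow_eq_upper_zero hn₀ t
    exact ⟨x, y, .inl h⟩

theorem isCommutatorPowUpToSign (hn : (n : K) ≠ 0) (g : SL(2, K)) :
    IsCommutatorPowUpToSign n g := by
  obtain ⟨c, t, b, h⟩ := exists_conj_eq_upper g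
  exact .of_conj c (h ▸ isCommutatorPowUpToSign_upper hn t b)

end Matrix.SpecialLinearGroup

/-- Surjectivity of the word map `w = ⁅x,y⁆ᵖ` on `PSL₂(ℂ)` for a prime `p`: for every
`g ∈ SL₂(ℂ)` there are `x, y` with `⁅x,y⁆ᵖ = ±g`. -/
theorem commutator_power_word_map_surjective_PSL2C (p : ℕ) (hp : p.Prime)
    (g : Matrix.SpecialLinearGroup (Fin 2) ℂ) :
    ∃ x y : Matrix.SpecialLinearGroup (Fin 2) ℂ,
      (↑((x * y * x⁻¹ * y⁻¹) ^ p) : Matrix (Fin 2) (Fin 2) ℂ)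
          = (↑g : Matrix (Fin 2) (Fin 2) ℂ) ∨
      (↑((x * y * x⁻¹ * y⁻¹) ^ p) : Matrix (Fin 2) (Fin 2) ℂ)
          = -(↑g : Matrix (Fin 2) (Fin 2) ℂ) := by
  obtain ⟨x, y, h⟩ := isCommutatorPowUpToSign (Nat.cast_ne_zero.mpr hp.ne_zero) g
  exact ⟨x, y, h.imp (congrArg _) fun h ↦ (congrArg _ h).trans (coe_neg g)⟩
end
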